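/- arXiv:2507.18579 — 5 statements merged into one kernel-verified Lean document; each statement's English description precedes it below -/
import Mathlib

section
/- Let q = 2^s, S = F_q[y_1,...,y_m,x_m,...,x_1], and for i ≥ 2 let ξ_i = Σ_{j=1}^m (x_j y_j^{q^i} + y_j x_j^{q^i}). Then the complete Steenrod operator satisfies P(t)(ξ_i) = ξ_i + ξ_{i-1}^q t + ξ_{i+1} t^{q^i} + ξ_i^q t^{q^i+1}. -/
open MvPolynomial

/-- The complete Steenrod operator `P(t)`, the algebra homomorphism determined
by `v ↦ v + v^q t` on degree-one elements. -/
noncomputable def stP (q : ℕ) (σ : Type*) (F : Type*) [Field F] :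
    MvPolynomial σ F →ₐ[F] Polynomial (MvPolynomial σ F) :=
  MvPolynomial.aeval fun i =>
    Polynomial.C (MvPolynomial.X i) + Polynomial.C (MvPolynomial.X i ^ q) * Polynomial.X

/-- `ξ_i = Σ_j (x_j y_j^{q^i} + y_j x_j^{q^i})` in `S = F_q[y_1,…,y_m,x_m,…,x_1]`
(`inl j` is `y_j`, `inr j` is `x_j`). -/
noncomputable def xiGen (q m : ℕ) (F : Type*) [Field F] (i : ℕ) :
    MvPolynomial (Fin m ⊕ Fin m) F :=
  ∑ j : Fin m, (X (Sum.inr j) * X (Sum.inl j) ^ q ^ i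
    + X (Sum.inl j) * X (Sum.inr j) ^ q ^ i)

/-!
`P(t)` is a ring homomorphism and, in characteristic `p` with `q = p^s`, raising to a power
of `q` is additive, so `P(t)(v^{q^k}) = v^{q^k} + v^{q^{k+1}} t^{q^k}` for every variable `v`.
Expanding `P(t)(x y^{q^i} + y x^{q^i})` therefore gives four symmetric pieces, and the piece
`x^q y^{q^i} + y^q x^{q^i}` in front of `t` is the `q`-th power of `x y^{q^{i-1}} + y x^{q^{i-1}}`
once `i ≥ 1`. Summing over `j` gives the formula for `ξ_i`.
-/

theorem add_pow_expChar_pow_pow {R : Type*} [CommSemiring R] {p : ℕ} [ExpChar R p]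
    (x y : R) (s n : ℕ) :
    (x + y) ^ (p ^ s) ^ n = x ^ (p ^ s) ^ n + y ^ (p ^ s) ^ n := by
  rw [← pow_mul]
  exact add_pow_expChar_pow x y p (s * n)

section SteenrodOperator

variable {σ F : Type*} [Field F] {p : ℕ} [ExpChar F p]

noncomputable def xiTerm (q : ℕ) (a b : σ) (n : ℕ) : MvPolynomial σ F :=
  X a * X b ^ q ^ n + X b * X a ^ q ^ n

theorem xiGen_eq_sum_xiTerm (q m : ℕ) (i : ℕ) :
    xiGen q m F i = ∑ j : Fin m, xiTerm q (Sum.inr j) (Sum.inl j) i :=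
  rfl

theorem xiTerm_pow (s : ℕ) (a b : σ) (n : ℕ) :
    (xiTerm (p ^ s) a b n : MvPolynomial σ F) ^ p ^ s =
      X a ^ p ^ s * X b ^ (p ^ s) ^ (n + 1) + X b ^ p ^ s * X a ^ (p ^ s) ^ (n + 1) := by
  rw [xiTerm, add_pow_expChar_pow, mul_pow, mul_pow, ← pow_mul (X b), ← pow_mul (X a), ← pow_succ]

theorem stP_X (q : ℕ) (v : σ) :
    stP q σ F (X v) = Polynomial.C (X v) + Polynomial.C (X v ^ q) * Polynomial.X :=
  aeval_X _ v

theorem stP_X_pow_pow (s : ℕ) (v : σ) (n : ℕ) :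
    stP (p ^ s) σ F (X v ^ (p ^ s) ^ n) =
      Polynomial.C (X v ^ (p ^ s) ^ n)
        + Polynomial.C (X v ^ (p ^ s) ^ (n + 1)) * Polynomial.X ^ (p ^ s) ^ n := by
  rw [map_pow, stP_X, add_pow_expChar_pow_pow, mul_pow, ← Polynomial.C_pow, ← Polynomial.C_pow,
    ← pow_mul (X v) (p ^ s), ← pow_succ']

theorem stP_xiTerm_succ (s : ℕ) (a b : σ) (n : ℕ) :
    stP (p ^ s) σ F (xiTerm (p ^ s) a b (n + 1)) =
      Polynomial.C (xiTerm (p ^ s) a b (n + 1))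
        + Polynomial.C (xiTerm (p ^ s) a b n ^ p ^ s) * Polynomial.X
        + Polynomial.C (xiTerm (p ^ s) a b (n + 2)) * Polynomial.X ^ (p ^ s) ^ (n + 1)
        + Polynomial.C (xiTerm (p ^ s) a b (n + 1) ^ p ^ s)
          * Polynomial.X ^ ((p ^ s) ^ (n + 1) + 1) := by
  rw [xiTerm_pow, xiTerm_pow]
  simp only [xiTerm, map_add, map_mul, stP_X, stP_X_pow_pow, Polynomial.C_pow]
  ring

theorem stP_xiGen_succ (s m : ℕ) (n : ℕ) :
    stP (p ^ s) (Fin m ⊕ Fin m) F (xiGen (p ^ s) m F (n + 1)) =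
      Polynomial.C (xiGen (p ^ s) m F (n + 1))
        + Polynomial.C (xiGen (p ^ s) m F n ^ p ^ s) * Polynomial.X
        + Polynomial.C (xiGen (p ^ s) m F (n + 2)) * Polynomial.X ^ (p ^ s) ^ (n + 1)
        + Polynomial.C (xiGen (p ^ s) m F (n + 1) ^ p ^ s)
          * Polynomial.X ^ ((p ^ s) ^ (n + 1) + 1) := by
  simp only [xiGen_eq_sum_xiTerm, map_sum, stP_xiTerm_succ]
  simp only [Finset.sum_add_distrib, ← Finset.sum_mul, ← iterateFrobenius_def (p := p), ← map_sum]

end SteenrodOperator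

theorem stmt_3_general {F : Type*} [Field F] [Fintype F] (s m q : ℕ)
    (hq : q = 2 ^ s) (hF : Fintype.card F = q) (i : ℕ) (hi : 2 ≤ i) :
    (stP q (Fin m ⊕ Fin m) F) (xiGen q m F i) =
      Polynomial.C (xiGen q m F i)
      + Polynomial.C (xiGen q m F (i - 1) ^ q) * Polynomial.X
      + Polynomial.C (xiGen q m F (i + 1)) * Polynomial.X ^ q ^ i
      + Polynomial.C (xiGen q m F i ^ q) * Polynomial.X ^ (q ^ i + 1) := by
  subst hq
  have : CharP F 2 := charP_of_card_eq_prime_pow hF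
  obtain ⟨n, rfl⟩ : ∃ n, i = n + 1 := ⟨i - 1, by omega⟩
  exact stP_xiGen_succ s m n

/-- For `i ≥ 2`,
`P(t)(ξ_i) = ξ_i + ξ_{i-1}^q t + ξ_{i+1} t^{q^i} + ξ_i^q t^{q^i+1}`. -/
theorem stmt_3 {F : Type*} [Field F] [Fintype F] (s m q : ℕ) (hs : 1 ≤ s)
    (hq : q = 2 ^ s) (hF : Fintype.card F = q) (i : ℕ) (hi : 2 ≤ i) :
    (stP q (Fin m ⊕ Fin m) F) (xiGen q m F i) =
      Polynomial.C (xiGen q m F i)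
      + Polynomial.C (xiGen q m F (i - 1) ^ q) * Polynomial.X
      + Polynomial.C (xiGen q m F (i + 1)) * Polynomial.X ^ q ^ i
      + Polynomial.C (xiGen q m F i ^ q) * Polynomial.X ^ (q ^ i + 1) :=
  stmt_3_general s m q hq hF i hi
end

section
/- Let q = 2^s with s ≥ 1, and let d̃_{1,2} be the first Dickson invariant of GL_2(F_q) acting on F_q[x_1,x_2], so d̃_{1,2} = x_1^{q(q-1)} + N(x_2)^{q-1} with N(x_2) = x_2^q + x_2 x_1^{q-1}. Then the sum of the non-square terms of d̃_{1,2} equals ũ_2^{q-2} x_1 x_2, where ũ_2 = x_1 N(x_2) = x_1 x_2^q + x_2 x_1^q. -/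
open MvPolynomial
open scoped Classical

/-- `ns F`: the sum of the non-square terms of a polynomial, i.e. the terms
whose monomial has some odd exponent (over a field of characteristic 2 where
every scalar is a square, a term is a square iff its monomial is a square). -/
noncomputable def nsPart {σ : Type*} {F : Type*} [Field F] (p : MvPolynomial σ F) :
    MvPolynomial σ F :=
  ∑ d ∈ p.support.filter (fun d => ¬ ∀ i, Even (d i)),
    MvPolynomial.monomial d (p.coeff d)

/-!
Put `a = x₁^(q-1)` and `b = x₂^(q-1)`. Then `N(x₂) = x₂ (a + b)`, and in characteristic 2 the
Frobenius identity `(a + b)^q = a^q + b^q` gives `(a + b)^(q-1) = ∑_{i+j=q-1} a^i b^j`, so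
`d̃_{1,2} = ∑_{i+j=q} a^i b^j`, a sum of monomials `x₁^((q-1)i) x₂^((q-1)j)`.
As `q - 1` is odd and `q` is even, such a monomial is a non-square exactly when `i` is odd, and
the odd-`i` terms add up to `a b ∑_{i+j=q/2-1} (a²)^i (b²)^j = a b (a + b)^(q-2) = ũ₂^(q-2) x₁ x₂`.
-/

open Finset

theorem sum_filter_odd_antidiagonal {M : Type*} [AddCommMonoid M] (m : ℕ) (f : ℕ × ℕ → M) :
    ∑ p ∈ (antidiagonal (2 * m + 2)).filter (fun p => Odd p.1), f p =
      ∑ p ∈ antidiagonal m, f (2 * p.1 + 1, 2 * p.2 + 1) := by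
  symm
  refine sum_nbij' (fun p => (2 * p.1 + 1, 2 * p.2 + 1)) (fun p => (p.1 / 2, p.2 / 2))
    ?_ ?_ ?_ ?_ (fun _ _ => rfl)
  all_goals
    rintro ⟨i, j⟩ h
    simp only [mem_filter, HasAntidiagonal.mem_antidiagonal, Nat.odd_iff, Prod.mk.injEq] at h ⊢
    omega

theorem mul_pow_add_mul_pow_pow_sub_two_mul {R : Type*} [CommRing R] (x y : R) {q : ℕ}
    (hq : 2 ≤ q) :
    (x * y ^ q + y * x ^ q) ^ (q - 2) * (x * y) =
      x ^ (q - 1) * y ^ (q - 1) * (x ^ (q - 1) + y ^ (q - 1)) ^ (q - 2) := by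
  obtain ⟨m, rfl⟩ := Nat.exists_eq_add_of_le' hq
  rw [Nat.add_sub_cancel, show m + 2 - 1 = m + 1 by omega,
    show x * y ^ (m + 2) + y * x ^ (m + 2) = x * y * (x ^ (m + 1) + y ^ (m + 1)) by ring, mul_pow]
  ring

section CharTwo

variable {R : Type*} [CommRing R] [CharP R 2]

theorem add_mul_sum_antidiagonal_pow (x y : R) (n : ℕ) :
    (x + y) * ∑ p ∈ antidiagonal n, x ^ p.1 * y ^ p.2 = x ^ (n + 1) + y ^ (n + 1) := by
  induction n with
  | zero => simp
  | succ n ih =>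
    rw [Nat.sum_antidiagonal_succ]
    simp only [pow_succ', mul_assoc, ← mul_sum, pow_zero, one_mul]
    linear_combination x * ih + x * y ^ (n + 1) * CharTwo.two_eq_zero (R := R)

theorem add_pow_two_pow_sub_one [IsDomain R] (x y : R) (s : ℕ) :
    (x + y) ^ (2 ^ s - 1) = ∑ p ∈ antidiagonal (2 ^ s - 1), x ^ p.1 * y ^ p.2 := by
  have hs : 2 ^ s - 1 + 1 = 2 ^ s := Nat.sub_add_cancel Nat.one_le_two_pow
  rcases eq_or_ne (x + y) 0 with hxy | hxy
  · obtain rfl := CharTwo.add_eq_zero.mp hxy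
    rw [sum_congr rfl fun p hp => by rw [← pow_add, mem_antidiagonal.mp hp], sum_const,
      Nat.card_antidiagonal, hs, nsmul_eq_mul, hxy]
    rcases s with _ | s
    · simp
    · rw [zero_pow (Nat.sub_ne_zero_of_lt (Nat.one_lt_two_pow' s)), Nat.cast_pow, Nat.cast_ofNat,
        CharTwo.two_eq_zero, zero_pow s.succ_ne_zero, zero_mul]
  · refine mul_left_cancel₀ hxy ?_
    rw [← pow_succ', add_mul_sum_antidiagonal_pow, hs, add_pow_char_pow]

theorem dickson_eq_sum_antidiagonal [IsDomain R] (x y : R) (s : ℕ) :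
    x ^ (2 ^ s * (2 ^ s - 1)) + (y ^ 2 ^ s + y * x ^ (2 ^ s - 1)) ^ (2 ^ s - 1) =
      ∑ p ∈ antidiagonal (2 ^ s), (x ^ (2 ^ s - 1)) ^ p.1 * (y ^ (2 ^ s - 1)) ^ p.2 := by
  have hs : 2 ^ s - 1 + 1 = 2 ^ s := Nat.sub_add_cancel Nat.one_le_two_pow
  set a := x ^ (2 ^ s - 1)
  set b := y ^ (2 ^ s - 1)
  have hN : y ^ 2 ^ s + y * a = y * (a + b) := by
    rw [← hs, pow_succ']
    ring
  calc x ^ (2 ^ s * (2 ^ s - 1)) + (y ^ 2 ^ s + y * a) ^ (2 ^ s - 1)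
      = a ^ (2 ^ s - 1 + 1) * b ^ 0 + b * (a + b) ^ (2 ^ s - 1) := by
        rw [hN, mul_pow, hs, ← pow_mul, mul_comm (2 ^ s)]
        ring
    _ = ∑ p ∈ antidiagonal (2 ^ s), a ^ p.1 * b ^ p.2 := by
        rw [add_pow_two_pow_sub_one, mul_sum]
        conv_rhs => rw [← hs, Nat.sum_antidiagonal_succ']
        simp only [pow_succ', mul_left_comm b]

theorem sum_filter_odd_antidiagonal_two_pow [IsDomain R] (a b : R) (t : ℕ) :
    ∑ p ∈ (antidiagonal (2 ^ (t + 1))).filter (fun p => Odd p.1), a ^ p.1 * b ^ p.2 =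
      a * b * (a + b) ^ (2 ^ (t + 1) - 2) := by
  have ht : 2 ^ (t + 1) = 2 * (2 ^ t - 1) + 2 := by
    have := Nat.one_le_two_pow (n := t)
    rw [pow_succ]
    omega
  rw [ht, sum_filter_odd_antidiagonal, Nat.add_sub_cancel, pow_mul, CharTwo.add_sq,
    add_pow_two_pow_sub_one, mul_sum]
  exact sum_congr rfl fun p _ => by ring

end CharTwo

section NonSquarePart

variable {σ F : Type*} [Field F]

theorem coeff_nsPart (p : MvPolynomial σ F) (d : σ →₀ ℕ) :
    coeff d (nsPart p) = if ∀ i, Even (d i) then 0 else coeff d p := by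
  rw [nsPart, coeff_sum]
  simp only [coeff_monomial, sum_ite_eq', mem_filter, mem_support_iff]
  by_cases hd : ∀ i, Even (d i) <;> by_cases hp : coeff d p = 0 <;> simp [hd, hp]

theorem nsPart_sum {ι : Type*} (S : Finset ι) (f : ι → MvPolynomial σ F) :
    nsPart (∑ i ∈ S, f i) = ∑ i ∈ S, nsPart (f i) := by
  ext d
  simp only [coeff_nsPart, coeff_sum]
  split_ifs <;> simp

theorem nsPart_monomial (d : σ →₀ ℕ) (c : F) :
    nsPart (monomial d c) = if ∀ i, Even (d i) then 0 else monomial d c := by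
  ext d'
  obtain rfl | hne := eq_or_ne d d'
  · split_ifs with h <;> simp [coeff_nsPart, h]
  · split_ifs <;> simp [coeff_nsPart, coeff_monomial, hne]

theorem nsPart_X_pow_mul_X_pow {i j : σ} (hij : i ≠ j) (a b : ℕ) :
    nsPart (X i ^ a * X j ^ b : MvPolynomial σ F) =
      if Even a ∧ Even b then 0 else X i ^ a * X j ^ b := by
  have hsq : (∀ k, Even ((Finsupp.single i a + Finsupp.single j b) k)) ↔ Even a ∧ Even b := by
    refine ⟨fun h => ⟨?_, ?_⟩, ?_⟩
    · simpa [hij] using h i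
    · simpa [hij] using h j
    rintro ⟨ha, hb⟩ k
    simp only [Finsupp.add_apply, Finsupp.single_apply]
    split_ifs <;> simp_all
  rw [X_pow_eq_monomial, X_pow_eq_monomial, monomial_mul, one_mul, nsPart_monomial]
  exact if_congr hsq rfl rfl

theorem nsPart_sum_antidiagonal {i j : σ} (hij : i ≠ j) {c n : ℕ} (hc : Odd c) (hn : Even n) :
    nsPart (∑ p ∈ antidiagonal n, (X i ^ c) ^ p.1 * (X j ^ c) ^ p.2 : MvPolynomial σ F) =
      ∑ p ∈ (antidiagonal n).filter (fun p => Odd p.1), (X i ^ c) ^ p.1 * (X j ^ c) ^ p.2 := by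
  rw [nsPart_sum, sum_filter]
  refine sum_congr rfl fun p hp => ?_
  have hsq : Even (c * p.1) ∧ Even (c * p.2) ↔ ¬ Odd p.1 := by
    rw [← HasAntidiagonal.mem_antidiagonal.mp hp, Nat.even_add] at hn
    simp only [Nat.even_mul, Nat.not_even_iff_odd.mpr hc, false_or, Nat.not_odd_iff_even]
    tauto
  rw [← pow_mul, ← pow_mul, nsPart_X_pow_mul_X_pow hij, if_congr hsq rfl rfl, ite_not]

end NonSquarePart

/-- `ns(d̃_{1,2}) = ũ_2^{q-2} x_1 x_2`, where
`d̃_{1,2} = x_1^{q(q-1)} + N(x_2)^{q-1}` with `N(x_2) = x_2^q + x_2 x_1^{q-1}`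
and `ũ_2 = x_1 x_2^q + x_2 x_1^q`.  (Here `x_1 = X 0`, `x_2 = X 1`.) -/
theorem stmt_6 {F : Type*} [Field F] [Fintype F] (s q : ℕ) (hs : 1 ≤ s)
    (hq : q = 2 ^ s) (hF : Fintype.card F = q) :
    nsPart ((X 0 : MvPolynomial (Fin 2) F) ^ (q * (q - 1))
        + (X 1 ^ q + X 1 * X 0 ^ (q - 1)) ^ (q - 1)) =
      ((X 0 : MvPolynomial (Fin 2) F) * X 1 ^ q + X 1 * X 0 ^ q) ^ (q - 2)
        * (X 0 * X 1) := by
  obtain ⟨t, rfl⟩ : ∃ t, s = t + 1 := ⟨s - 1, by omega⟩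
  subst hq
  have : CharP F 2 := charP_of_card_eq_prime_pow hF
  have h_even : Even (2 ^ (t + 1)) := (Nat.even_pow' t.succ_ne_zero).mpr even_two
  have h_odd : Odd (2 ^ (t + 1) - 1) := Nat.Even.sub_odd Nat.one_le_two_pow h_even odd_one
  rw [dickson_eq_sum_antidiagonal, nsPart_sum_antidiagonal (by decide) h_odd h_even,
    sum_filter_odd_antidiagonal_two_pow,
    mul_pow_add_mul_pow_pow_sub_two_mul _ _ (Nat.le_self_pow t.succ_ne_zero 2)]
end

section
/- Let q = 2^s, G a subgroup of O_{2m+1}(F_q) acting on S[z] = F_q[y_1,...,y_m,x_m,...,x_1,z], and F ∈ S[z]^G a G-invariant. Write F = f·ξ_0 + a z + b by division by ξ_0 (monic of degree 2 in z) with f ∈ S[z] and a, b ∈ S. Then f and a z + b are both G-invariant, and moreover a ∈ S^G and b ∈ S^{G_z} where G_z is the pointwise stabiliser of z in G. -/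
open MvPolynomial

/-- Variable index set for `S[z] = F_q[y_1,…,y_m,x_m,…,x_1,z]`:
`none` is `z`, `some (inl j)` is `y_j`, `some (inr j)` is `x_j`. -/
abbrev OIdx (m : ℕ) := Option (Fin m ⊕ Fin m)

/-- The action of an invertible linear map `g` of `V = ι → F` on the polynomial
ring on `V`, so that `eval v (act g f) = eval (g v) f`. -/
noncomputable def act {F : Type*} [Field F] {ι : Type*} [Fintype ι] [DecidableEq ι]
    (g : (ι → F) ≃ₗ[F] (ι → F)) : MvPolynomial ι F →ₐ[F] MvPolynomial ι F :=
  MvPolynomial.aeval fun i => ∑ j, MvPolynomial.C (g (Pi.single j 1) i) * MvPolynomial.X j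

/-- The inclusion `S = F_q[y_1,…,y_m,x_m,…,x_1] → S[z]`. -/
noncomputable def emb (m : ℕ) (F : Type*) [Field F] :
    MvPolynomial (Fin m ⊕ Fin m) F →ₐ[F] MvPolynomial (OIdx m) F :=
  MvPolynomial.rename some

/-- The quadratic form `ξ_0 = z^2 + Σ x_j y_j`. -/
noncomputable def xiZero (m : ℕ) (F : Type*) [Field F] : MvPolynomial (OIdx m) F :=
  X none ^ 2 + ∑ j : Fin m, X (some (Sum.inr j)) * X (some (Sum.inl j))

/-! In characteristic 2 the polar form of `ξ₀` has radical spanned by the basis vector `e_z`,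
and `ξ₀(e_z) = 1`; as squaring is injective, every `g` preserving `ξ₀` fixes `e_z`. Dually, `g`
maps `S` into itself and `z` to `z + ℓ` with `ℓ ∈ S`, so applying `g` to `F = f ξ₀ + a z + b`
yields a second division of `F` by `ξ₀`, with quotient `g f` and `z`-coefficient `g a`.
Uniqueness of the division gives `g f = f` and `g a = a`; then `a z + b = F - f ξ₀` is
invariant, and so is `b` when `g z = z`. -/

theorem eval_act {F : Type*} [Field F] {ι : Type*} [Fintype ι] [DecidableEq ι]
    (g : (ι → F) ≃ₗ[F] (ι → F)) (v : ι → F) (p : MvPolynomial ι F) :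
    eval v (act g p) = eval (g v) p := by
  change aeval v (act g p) = aeval (g v) p
  rw [act, comp_aeval_apply]
  congr 2
  funext i
  conv_rhs => rw [← Finset.univ_sum_single v]
  simp only [map_sum, map_mul, aeval_C, aeval_X, Finset.sum_apply, Algebra.algebraMap_self,
    RingHom.id_apply]
  refine Finset.sum_congr rfl fun j _ => ?_
  have : Pi.single j (v j) = v j • (Pi.single j 1 : ι → F) := by simp [← Pi.single_smul']
  rw [this, map_smul, Pi.smul_apply, smul_eq_mul, mul_comm]

section QuadraticForm

variable {F : Type*} [Field F] {m : ℕ}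

theorem eval_xiZero (v : OIdx m → F) :
    eval v (xiZero m F) = v none ^ 2 + ∑ j, v (some (.inr j)) * v (some (.inl j)) := by
  simp [xiZero]

theorem polar_eval_xiZero [CharP F 2] (u w : OIdx m → F) :
    QuadraticMap.polar (fun v => eval v (xiZero m F)) u w =
      ∑ j, (u (some (.inr j)) * w (some (.inl j)) + u (some (.inl j)) * w (some (.inr j))) := by
  simp only [QuadraticMap.polar, eval_xiZero, Pi.add_apply, CharTwo.sub_eq_add, CharTwo.add_sq]
  have hsum : ∀ j : Fin m, (u (some (.inr j)) + w (some (.inr j))) *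
      (u (some (.inl j)) + w (some (.inl j))) = u (some (.inr j)) * u (some (.inl j)) +
        w (some (.inr j)) * w (some (.inl j)) +
        (u (some (.inr j)) * w (some (.inl j)) + u (some (.inl j)) * w (some (.inr j))) :=
    fun j => by ring
  simp only [hsum, Finset.sum_add_distrib]
  ring_nf
  simp [CharTwo.two_eq_zero]

theorem polar_eval_xiZero_single_none [CharP F 2] (w : OIdx m → F) :
    QuadraticMap.polar (fun v => eval v (xiZero m F)) (Pi.single none 1) w = 0 := by
  simp [polar_eval_xiZero]

theorem eq_smul_single_none_of_polar_eval_xiZero_eq_zero [CharP F 2] {u : OIdx m → F}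
    (h : ∀ w, QuadraticMap.polar (fun v => eval v (xiZero m F)) u w = 0) :
    u = u none • Pi.single none 1 := by
  funext i
  rcases i with _ | j | j
  · simp
  · simpa [polar_eval_xiZero, Pi.single_apply] using h (Pi.single (some (.inr j)) 1)
  · simpa [polar_eval_xiZero, Pi.single_apply] using h (Pi.single (some (.inl j)) 1)

end QuadraticForm

theorem apply_single_none_of_act_xiZero {F : Type*} [Field F] [CharP F 2] {m : ℕ}
    (g : (OIdx m → F) ≃ₗ[F] (OIdx m → F)) (hg : act g (xiZero m F) = xiZero m F) :
    g (Pi.single none 1) = Pi.single none 1 := by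
  set Q : (OIdx m → F) → F := fun v => eval v (xiZero m F)
  have hQ : ∀ v, Q (g v) = Q v := fun v => by simp only [Q, ← eval_act, hg]
  have hpolar : ∀ u w, QuadraticMap.polar Q (g u) (g w) = QuadraticMap.polar Q u w := by
    intro u w
    simp only [QuadraticMap.polar, ← map_add, hQ]
  -- `g` preserves the radical of the polar form, which is the line through `z`
  have hrad : ∀ w, QuadraticMap.polar Q (g (Pi.single none 1)) w = 0 := fun w => by
    rw [← g.apply_symm_apply w, hpolar, polar_eval_xiZero_single_none]
  have hline := eq_smul_single_none_of_polar_eval_xiZero_eq_zero hrad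
  have hsq : g (Pi.single none 1) none ^ 2 = 1 ^ 2 := by
    have := hQ (Pi.single none 1)
    rw [hline] at this
    simpa [Q, eval_xiZero] using this
  rw [hline, CharTwo.sq_injective hsq, one_smul]

section FixingZ

variable {F : Type*} [Field F] {m : ℕ} {g : (OIdx m → F) ≃ₗ[F] (OIdx m → F)}

theorem exists_act_emb_eq (hg : g (Pi.single none 1) = Pi.single none 1)
    (c : MvPolynomial (Fin m ⊕ Fin m) F) : ∃ c', act g (emb m F c) = emb m F c' := by
  refine ⟨aeval (fun i => ∑ j, C (g (Pi.single (some j) 1) (some i)) * X j) c, ?_⟩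
  rw [act, emb, aeval_rename, comp_aeval_apply]
  congr 2
  funext i
  simp [Fintype.sum_option, hg]

theorem exists_act_X_none_eq (hg : g (Pi.single none 1) = Pi.single none 1) :
    ∃ ℓ, act g (X none) = X none + emb m F ℓ := by
  refine ⟨∑ j, C (g (Pi.single (some j) 1) none) * X j, ?_⟩
  simp [act, emb, Fintype.sum_option, hg]

end FixingZ

theorem Polynomial.eq_of_mul_add_linear_eq {R : Type*} [CommRing R] {p : Polynomial R}
    (hp : p.Monic) (hdeg : 1 < p.degree) {q₁ q₂ : Polynomial R} {a₁ b₁ a₂ b₂ : R}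
    (h : p * q₁ + (C a₁ * X + C b₁) = p * q₂ + (C a₂ * X + C b₂)) :
    q₁ = q₂ ∧ a₁ = a₂ ∧ b₁ = b₂ := by
  have hlin : ∀ a b : R, (C a * X + C b).degree < p.degree := fun a b =>
    degree_linear_le.trans_lt hdeg
  obtain ⟨hq₁, hr₁⟩ := div_modByMonic_unique (f := p * q₁ + (C a₁ * X + C b₁)) q₁ _ hp
    ⟨add_comm _ _, hlin a₁ b₁⟩
  obtain ⟨hq₂, hr₂⟩ := div_modByMonic_unique (f := p * q₁ + (C a₁ * X + C b₁)) q₂ _ hp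
    ⟨by rw [h, add_comm], hlin a₂ b₂⟩
  have hr := hr₁.symm.trans hr₂
  refine ⟨hq₁.symm.trans hq₂, ?_, ?_⟩
  · simpa using congrArg (coeff · 1) hr
  · simpa using congrArg (coeff · 0) hr

section Division

variable {F : Type*} [Field F] {m : ℕ}

theorem optionEquivLeft_xiZero : optionEquivLeft F (Fin m ⊕ Fin m) (xiZero m F) =
    Polynomial.X ^ 2 + Polynomial.C (∑ j : Fin m, X (.inr j) * X (.inl j)) := by
  simp [xiZero, optionEquivLeft_X_none, optionEquivLeft_X_some]

theorem optionEquivLeft_emb (c : MvPolynomial (Fin m ⊕ Fin m) F) :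
    optionEquivLeft F (Fin m ⊕ Fin m) (emb m F c) = Polynomial.C c := by
  have : (optionEquivLeft F (Fin m ⊕ Fin m)).toAlgHom.comp (emb m F) = Polynomial.CAlgHom :=
    algHom_ext fun i => by simp [emb, optionEquivLeft_X_some]
  exact AlgHom.congr_fun this c

theorem eq_of_mul_xiZero_add_eq {f₁ f₂ : MvPolynomial (OIdx m) F}
    {a₁ b₁ a₂ b₂ : MvPolynomial (Fin m ⊕ Fin m) F}
    (h : f₁ * xiZero m F + emb m F a₁ * X none + emb m F b₁ =
      f₂ * xiZero m F + emb m F a₂ * X none + emb m F b₂) :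
    f₁ = f₂ ∧ a₁ = a₂ ∧ b₁ = b₂ := by
  set e := optionEquivLeft F (Fin m ⊕ Fin m)
  have he : ∀ f a b, e (f * xiZero m F + emb m F a * X none + emb m F b) =
      e (xiZero m F) * e f + (Polynomial.C a * Polynomial.X + Polynomial.C b) := fun f a b => by
    simp only [map_add, map_mul, optionEquivLeft_emb, e, optionEquivLeft_X_none]
    ring
  have hξ : (e (xiZero m F)).Monic := by
    rw [optionEquivLeft_xiZero]; exact Polynomial.monic_X_pow_add_C _ two_ne_zero
  have hdeg : 1 < (e (xiZero m F)).degree := by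
    rw [optionEquivLeft_xiZero, Polynomial.degree_X_pow_add_C two_pos]; decide
  have := congrArg e h
  rw [he, he] at this
  obtain ⟨hf, ha, hb⟩ := Polynomial.eq_of_mul_add_linear_eq hξ hdeg this
  exact ⟨e.injective hf, ha, hb⟩

end Division

theorem map_eq_of_map_mul_xiZero_add_eq {F : Type*} [Field F] {m : ℕ}
    (φ : MvPolynomial (OIdx m) F →ₐ[F] MvPolynomial (OIdx m) F)
    (hξ : φ (xiZero m F) = xiZero m F) (hS : ∀ c, ∃ c', φ (emb m F c) = emb m F c')
    (hz : ∃ ℓ, φ (X none) = X none + emb m F ℓ) {f : MvPolynomial (OIdx m) F}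
    {a b : MvPolynomial (Fin m ⊕ Fin m) F}
    (h : φ (f * xiZero m F + emb m F a * X none + emb m F b) =
      f * xiZero m F + emb m F a * X none + emb m F b) :
    φ f = f ∧ φ (emb m F a) = emb m F a := by
  obtain ⟨a', ha'⟩ := hS a
  obtain ⟨b', hb'⟩ := hS b
  obtain ⟨ℓ, hℓ⟩ := hz
  have hφ : φ (f * xiZero m F + emb m F a * X none + emb m F b) =
      φ f * xiZero m F + emb m F a' * X none + emb m F (a' * ℓ + b') := by
    rw [map_add, map_add, map_mul, map_mul, hξ, ha', hb', hℓ, map_add, map_mul]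
    ring
  obtain ⟨hf, ha, -⟩ := eq_of_mul_xiZero_add_eq (hφ.symm.trans h)
  exact ⟨hf, by rw [ha', ha]⟩

theorem stmt_10_general {F : Type*} [Field F] [Fintype F] (s m q : ℕ)
    (hq : q = 2 ^ s) (hF : Fintype.card F = q)
    (G : Subgroup ((OIdx m → F) ≃ₗ[F] (OIdx m → F)))
    (hG : ∀ g ∈ G, act g (xiZero m F) = xiZero m F)
    (Fp : MvPolynomial (OIdx m) F) (hFp : ∀ g ∈ G, act g Fp = Fp)
    (f : MvPolynomial (OIdx m) F) (a b : MvPolynomial (Fin m ⊕ Fin m) F)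
    (hdec : Fp = f * xiZero m F + emb m F a * X none + emb m F b) :
    (∀ g ∈ G, act g f = f) ∧
    (∀ g ∈ G, act g (emb m F a * X none + emb m F b) = emb m F a * X none + emb m F b) ∧
    (∀ g ∈ G, act g (emb m F a) = emb m F a) ∧
    (∀ g ∈ G, act g (X none) = (X none : MvPolynomial (OIdx m) F) →
      act g (emb m F b) = emb m F b) := by
  have : CharP F 2 := charP_of_card_eq_prime_pow (hF.trans hq)
  have hfa : ∀ g ∈ G, act g f = f ∧ act g (emb m F a) = emb m F a := fun g hg => by
    have hz := apply_single_none_of_act_xiZero g (hG g hg)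
    exact map_eq_of_map_mul_xiZero_add_eq (act g) (hG g hg) (exists_act_emb_eq hz)
      (exists_act_X_none_eq hz) (hdec ▸ hFp g hg)
  have hrem : ∀ g ∈ G,
      act g (emb m F a * X none + emb m F b) = emb m F a * X none + emb m F b := by
    intro g hg
    have hsub : emb m F a * X none + emb m F b = Fp - f * xiZero m F := by rw [hdec]; ring
    rw [hsub, map_sub, map_mul, hFp g hg, (hfa g hg).1, hG g hg]
  refine ⟨fun g hg => (hfa g hg).1, hrem, fun g hg => (hfa g hg).2, fun g hg hz => ?_⟩
  have hsub : emb m F b = (emb m F a * X none + emb m F b) - emb m F a * X none := by ring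
  rw [hsub, map_sub, map_mul, hrem g hg, (hfa g hg).2, hz]

/-- Dividing a `G`-invariant `F ∈ S[z]^G` by `ξ_0` as `F = f ξ_0 + a z + b`
with `a, b ∈ S`: then `f` and `a z + b` are `G`-invariant, `a ∈ S^G`, and
`b ∈ S^{G_z}`, where `G_z` is the pointwise stabiliser of `z` in `G`. -/
theorem stmt_10 {F : Type*} [Field F] [Fintype F] (s m q : ℕ) (hs : 1 ≤ s)
    (hq : q = 2 ^ s) (hF : Fintype.card F = q)
    (G : Subgroup ((OIdx m → F) ≃ₗ[F] (OIdx m → F)))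
    (hG : ∀ g ∈ G, act g (xiZero m F) = xiZero m F)
    (Fp : MvPolynomial (OIdx m) F) (hFp : ∀ g ∈ G, act g Fp = Fp)
    (f : MvPolynomial (OIdx m) F) (a b : MvPolynomial (Fin m ⊕ Fin m) F)
    (hdec : Fp = f * xiZero m F + emb m F a * X none + emb m F b) :
    (∀ g ∈ G, act g f = f) ∧
    (∀ g ∈ G, act g (emb m F a * X none + emb m F b) = emb m F a * X none + emb m F b) ∧
    (∀ g ∈ G, act g (emb m F a) = emb m F a) ∧
    (∀ g ∈ G, act g (X none) = (X none : MvPolynomial (OIdx m) F) →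
      act g (emb m F b) = emb m F b) :=
  stmt_10_general s m q hq hF G hG Fp hFp f a b hdec
end

section
/- Let q = 2^s, G ≤ O_{2m+1}(F_q) acting on S[z] as above, and suppose F ∈ S^G is an invariant with ns(F) = a^2 ξ̄_0 for some a ∈ S^G, where ns(F) is the sum of the non-square terms of F and ξ̄_0 = Σ_{i=1}^m x_i y_i. Define b ∈ S by b^2 = F + ns(F) (possible since F + ns(F) has only square terms and every element of F_q is a square). Then b is G_z-invariant and f := a z + b is G-invariant in S[z], and f^2 + a^2 ξ_0 = F. -/
open MvPolynomial
open scoped Classical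

/-- `ξ̄_0 = Σ_j x_j y_j ∈ S`. -/
noncomputable def xiBar (m : ℕ) (F : Type*) [Field F] : MvPolynomial (Fin m ⊕ Fin m) F :=
  ∑ j : Fin m, X (Sum.inr j) * X (Sum.inl j)

/-!
In characteristic `2` the identity `(a z + b)^2 + a^2 (z^2 + ξ̄_0) = b^2 + a^2 ξ̄_0 = F` holds
with no cross terms, so `f^2 = F + a^2 ξ_0` is `G`-invariant. Squaring is injective on the
domain `S[z]`, hence `f` itself is `G`-invariant, and so is `b = f + a z` whenever `g` fixes `z`.
-/

theorem charP_two_of_card_eq_two_pow {F : Type*} [Field F] [Fintype F] {s : ℕ}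
    (h : Fintype.card F = 2 ^ s) : CharP F 2 := by
  have hpow : (2 : F) ^ s = 0 := by
    exact_mod_cast h ▸ FiniteField.cast_card_eq_zero F
  exact CharTwo.of_one_ne_zero_of_two_eq_zero one_ne_zero (eq_zero_of_pow_eq_zero hpow)

namespace CharTwo

variable {R : Type*} [CommRing R] [CharP R 2]

theorem sq_add_mul_sq_add (a b z c : R) :
    (a * z + b) ^ 2 + a ^ 2 * (z ^ 2 + c) = b ^ 2 + a ^ 2 * c := by
  rw [add_sq, mul_pow, mul_add, add_right_comm, CharTwo.add_cancel_left, add_comm]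

theorem map_eq_self_of_map_sq_eq_sq [IsReduced R] {Φ : Type*} [FunLike Φ R R]
    [MonoidHomClass Φ R R] (φ : Φ) {x : R} (h : φ (x ^ 2) = x ^ 2) : φ x = x :=
  frobenius_inj R 2 (by simpa [frobenius_def] using h)

end CharTwo

theorem xiZero_eq_sq_add_emb_xiBar (m : ℕ) (F : Type*) [Field F] :
    xiZero m F = X none ^ 2 + emb m F (xiBar m F) := by
  simp [xiZero, xiBar, emb, map_sum]

theorem stmt_11_general {F : Type*} [Field F] [Fintype F] (s m q : ℕ)
    (hq : q = 2 ^ s) (hF : Fintype.card F = q)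
    (G : Subgroup ((OIdx m → F) ≃ₗ[F] (OIdx m → F)))
    (hG : ∀ g ∈ G, act g (xiZero m F) = xiZero m F)
    (Fp a b : MvPolynomial (Fin m ⊕ Fin m) F)
    (hFp : ∀ g ∈ G, act g (emb m F Fp) = emb m F Fp)
    (ha : ∀ g ∈ G, act g (emb m F a) = emb m F a)
    (hns : nsPart Fp = a ^ 2 * xiBar m F)
    (hb : b ^ 2 = Fp + nsPart Fp) :
    (∀ g ∈ G, act g (X none) = (X none : MvPolynomial (OIdx m) F) →
      act g (emb m F b) = emb m F b) ∧
    (∀ g ∈ G, act g (emb m F a * X none + emb m F b)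
      = emb m F a * X none + emb m F b) ∧
    (emb m F a * X none + emb m F b) ^ 2 + emb m F a ^ 2 * xiZero m F
      = emb m F Fp := by
  have := charP_two_of_card_eq_two_pow (hF.trans hq)
  set f := emb m F a * X none + emb m F b
  have hFp_eq : b ^ 2 + a ^ 2 * xiBar m F = Fp := by
    rw [hb, hns, add_assoc, CharTwo.add_self_eq_zero, add_zero]
  have hf : f ^ 2 + emb m F a ^ 2 * xiZero m F = emb m F Fp := by
    rw [xiZero_eq_sq_add_emb_xiBar, CharTwo.sq_add_mul_sq_add, ← hFp_eq]
    simp only [map_add, map_mul, map_pow]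
  have hf_sq : f ^ 2 = emb m F Fp + emb m F a ^ 2 * xiZero m F := by
    rw [← hf, add_assoc, CharTwo.add_self_eq_zero, add_zero]
  have hf_inv : ∀ g ∈ G, act g f = f := fun g hg ↦ by
    refine CharTwo.map_eq_self_of_map_sq_eq_sq (act g) ?_
    rw [hf_sq]
    simp only [map_add, map_mul, map_pow, hFp g hg, ha g hg, hG g hg]
  have hb_eq : emb m F b = f + emb m F a * X none := by
    rw [add_comm, CharTwo.add_cancel_left]
  refine ⟨fun g hg hz ↦ ?_, hf_inv, hf⟩
  rw [hb_eq, map_add, map_mul, hf_inv g hg, ha g hg, hz]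

/-- If `F ∈ S^G` with `ns(F) = a^2 ξ̄_0` for some `a ∈ S^G`, and `b` is
determined by `b^2 = F + ns(F)`, then `b ∈ S^{G_z}`, `f := a z + b` is
`G`-invariant, and `f^2 + a^2 ξ_0 = F`. -/
theorem stmt_11 {F : Type*} [Field F] [Fintype F] (s m q : ℕ) (hs : 1 ≤ s)
    (hq : q = 2 ^ s) (hF : Fintype.card F = q)
    (G : Subgroup ((OIdx m → F) ≃ₗ[F] (OIdx m → F)))
    (hG : ∀ g ∈ G, act g (xiZero m F) = xiZero m F)
    (Fp a b : MvPolynomial (Fin m ⊕ Fin m) F)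
    (hFp : ∀ g ∈ G, act g (emb m F Fp) = emb m F Fp)
    (ha : ∀ g ∈ G, act g (emb m F a) = emb m F a)
    (hns : nsPart Fp = a ^ 2 * xiBar m F)
    (hb : b ^ 2 = Fp + nsPart Fp) :
    (∀ g ∈ G, act g (X none) = (X none : MvPolynomial (OIdx m) F) →
      act g (emb m F b) = emb m F b) ∧
    (∀ g ∈ G, act g (emb m F a * X none + emb m F b)
      = emb m F a * X none + emb m F b) ∧
    (emb m F a * X none + emb m F b) ^ 2 + emb m F a ^ 2 * xiZero m F
      = emb m F Fp :=
  stmt_11_general s m q hq hF G hG Fp a b hFp ha hns hb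
end

section
/- Let q = 2^s with q > 2 and m = 3. In the polynomial ring F_q[ξ_1,...,ξ_5] (the ξ_i algebraically independent), let δ_1 = ξ_1ξ_2ξ_1^{q^3} + ξ_1ξ_3ξ_2^{q^2} + ξ_1ξ_4ξ_1^{q^2} + ξ_2ξ_3ξ_3^q + ξ_2ξ_4ξ_2^q + ξ_3ξ_4ξ_1^q, δ_2 = ξ_1ξ_2ξ_2^{q^3} + ξ_1ξ_3ξ_3^{q^2} + ξ_1ξ_5ξ_1^{q^2} + ξ_2ξ_3ξ_4^q + ξ_2ξ_5ξ_2^q + ξ_3ξ_5ξ_1^q, δ_3 = ξ_1ξ_2ξ_1^{q^4} + ξ_1ξ_4ξ_3^{q^2} + ξ_1ξ_5ξ_2^{q^2} + ξ_2ξ_4ξ_4^q + ξ_2ξ_5ξ_3^q + ξ_4ξ_5ξ_1^q, δ_4 = ξ_1ξ_3ξ_1^{q^4} + ξ_1ξ_4ξ_2^{q^3} + ξ_1ξ_5ξ_1^{q^3} + ξ_3ξ_4ξ_4^q + ξ_3ξ_5ξ_3^q + ξ_4ξ_5ξ_2^q, let u_2 = ξ_3ξ_1^q + ξ_2^{q+1}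 + ξ_1^{q^2+1}, and let u_3 be the sum of all products of the factors ξ_{k-j}^{q^j} over partitions of {1,q,q^2,q^3,q^4,q^5} into pairs {q^j,q^k}, j<k, summed without carries (so u_3 = ξ_5ξ_3^qξ_1^{q^2} + ...). Then δ_1ξ_4^q + δ_2ξ_3^q + δ_3ξ_2^q + δ_4ξ_1^q = ξ_1 u_3 + ξ_1^2 u_2^{q^2}. -/
open MvPolynomial

/-- The algebraically independent elements `ξ_1, …, ξ_5`, treated as the
variables of the polynomial ring `F_q[ξ_1,…,ξ_5]`. -/
noncomputable def ξp (F : Type*) [Field F] : ℕ → MvPolynomial (Fin 5) F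
  | 1 => X 0
  | 2 => X 1
  | 3 => X 2
  | 4 => X 3
  | 5 => X 4
  | _ => 0

/-- `u_3`: the sum over all perfect matchings of `{0,1,2,3,4,5}` into pairs
`{j,k}` with `j < k` of `Π ξ_{k-j}^{q^j}` (the 15 natural monomials of
degree `1+q+q^2+q^3+q^4+q^5` and natural degree 3). -/
noncomputable def uThree (q : ℕ) (F : Type*) [Field F] : MvPolynomial (Fin 5) F :=
  ξp F 1 * ξp F 1 ^ q ^ 2 * ξp F 1 ^ q ^ 4
  + ξp F 1 * ξp F 2 ^ q ^ 2 * ξp F 2 ^ q ^ 3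
  + ξp F 1 * ξp F 3 ^ q ^ 2 * ξp F 1 ^ q ^ 3
  + ξp F 2 * ξp F 2 ^ q * ξp F 1 ^ q ^ 4
  + ξp F 2 * ξp F 3 ^ q * ξp F 2 ^ q ^ 3
  + ξp F 2 * ξp F 4 ^ q * ξp F 1 ^ q ^ 3
  + ξp F 3 * ξp F 1 ^ q * ξp F 1 ^ q ^ 4
  + ξp F 3 * ξp F 3 ^ q * ξp F 3 ^ q ^ 2
  + ξp F 3 * ξp F 4 ^ q * ξp F 2 ^ q ^ 2
  + ξp F 4 * ξp F 1 ^ q * ξp F 2 ^ q ^ 3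
  + ξp F 4 * ξp F 2 ^ q * ξp F 3 ^ q ^ 2
  + ξp F 4 * ξp F 4 ^ q * ξp F 1 ^ q ^ 2
  + ξp F 5 * ξp F 1 ^ q * ξp F 1 ^ q ^ 3
  + ξp F 5 * ξp F 2 ^ q * ξp F 2 ^ q ^ 2
  + ξp F 5 * ξp F 3 ^ q * ξp F 1 ^ q ^ 2

/-- `u_2 = ξ_3 ξ_1^q + ξ_2^{q+1} + ξ_1^{q^2+1}`. -/
noncomputable def uTwo (q : ℕ) (F : Type*) [Field F] : MvPolynomial (Fin 5) F :=
  ξp F 3 * ξp F 1 ^ q + ξp F 2 ^ (q + 1) + ξp F 1 ^ (q ^ 2 + 1)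


lemma frob_two {R : Type*} [CommRing R] (h2 : (2 : R) = 0) (n : ℕ) (x y : R) :
    (x + y) ^ 2 ^ n = x ^ 2 ^ n + y ^ 2 ^ n := by
  induction n with
  | zero => simp
  | succ n ih =>
    rw [pow_succ, pow_mul, pow_mul, pow_mul, ih]
    linear_combination (x ^ 2 ^ n * y ^ 2 ^ n) * h2

/-- `δ_1ξ_4^q + δ_2ξ_3^q + δ_3ξ_2^q + δ_4ξ_1^q = ξ_1 u_3 + ξ_1^2 u_2^{q^2}`
for `q = 2^s > 2`, with the `δ_i` as listed. -/
theorem stmt_14 {F : Type*} [Field F] [Fintype F] (s q : ℕ) (hs : 1 ≤ s)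
    (hq : q = 2 ^ s) (h2 : 2 < q) (hF : Fintype.card F = q) :
    (ξp F 1 * ξp F 2 * ξp F 1 ^ q ^ 3 + ξp F 1 * ξp F 3 * ξp F 2 ^ q ^ 2
        + ξp F 1 * ξp F 4 * ξp F 1 ^ q ^ 2 + ξp F 2 * ξp F 3 * ξp F 3 ^ q
        + ξp F 2 * ξp F 4 * ξp F 2 ^ q + ξp F 3 * ξp F 4 * ξp F 1 ^ q) * ξp F 4 ^ q
    + (ξp F 1 * ξp F 2 * ξp F 2 ^ q ^ 3 + ξp F 1 * ξp F 3 * ξp F 3 ^ q ^ 2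
        + ξp F 1 * ξp F 5 * ξp F 1 ^ q ^ 2 + ξp F 2 * ξp F 3 * ξp F 4 ^ q
        + ξp F 2 * ξp F 5 * ξp F 2 ^ q + ξp F 3 * ξp F 5 * ξp F 1 ^ q) * ξp F 3 ^ q
    + (ξp F 1 * ξp F 2 * ξp F 1 ^ q ^ 4 + ξp F 1 * ξp F 4 * ξp F 3 ^ q ^ 2
        + ξp F 1 * ξp F 5 * ξp F 2 ^ q ^ 2 + ξp F 2 * ξp F 4 * ξp F 4 ^ q
        + ξp F 2 * ξp F 5 * ξp F 3 ^ q + ξp F 4 * ξp F 5 * ξp F 1 ^ q) * ξp F 2 ^ q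
    + (ξp F 1 * ξp F 3 * ξp F 1 ^ q ^ 4 + ξp F 1 * ξp F 4 * ξp F 2 ^ q ^ 3
        + ξp F 1 * ξp F 5 * ξp F 1 ^ q ^ 3 + ξp F 3 * ξp F 4 * ξp F 4 ^ q
        + ξp F 3 * ξp F 5 * ξp F 3 ^ q + ξp F 4 * ξp F 5 * ξp F 2 ^ q) * ξp F 1 ^ q
    = ξp F 1 * uThree q F + ξp F 1 ^ 2 * uTwo q F ^ q ^ 2 := by

  have h2F : (2 : F) = 0 := by
    have hc : ((Fintype.card F : ℕ) : F) = 0 := FiniteField.cast_card_eq_zero F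
    rw [hF, hq] at hc
    push_cast at hc
    exact pow_eq_zero_iff (by omega) |>.mp hc
  have h20 : (2 : MvPolynomial (Fin 5) F) = 0 := by
    have := congrArg (MvPolynomial.C (σ := Fin 5)) h2F
    rwa [map_ofNat, map_zero] at this
  have hq2 : q ^ 2 = 2 ^ (s * 2) := by rw [hq, ← pow_mul]
  have hu : uTwo q F ^ q ^ 2
      = (X 2 : MvPolynomial (Fin 5) F) ^ q ^ 2 * X 0 ^ q ^ 3
        + X 1 ^ (q ^ 3 + q ^ 2) + X 0 ^ (q ^ 4 + q ^ 2) := by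
    have e1 : ((X 2 : MvPolynomial (Fin 5) F) * X 0 ^ q) ^ q ^ 2
        = (X 2 : MvPolynomial (Fin 5) F) ^ q ^ 2 * X 0 ^ q ^ 3 := by
      rw [mul_pow, ← pow_mul]
      congr 1
      ring
    have e2 : ((X 1 : MvPolynomial (Fin 5) F) ^ (q + 1)) ^ q ^ 2
        = (X 1 : MvPolynomial (Fin 5) F) ^ (q ^ 3 + q ^ 2) := by
      rw [← pow_mul]
      congr 1
      ring
    have e3 : ((X 0 : MvPolynomial (Fin 5) F) ^ (q ^ 2 + 1)) ^ q ^ 2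
        = (X 0 : MvPolynomial (Fin 5) F) ^ (q ^ 4 + q ^ 2) := by
      rw [← pow_mul]
      congr 1
      ring
    rw [uTwo]
    simp only [ξp]
    rw [hq2, frob_two h20, frob_two h20, ← hq2, e1, e2, e3]
  rw [hu, uThree]
  simp only [ξp]
  linear_combination (X 1 * X 2 * X 2 ^ q * X 3 ^ q + X 1 * X 3 * X 1 ^ q * X 3 ^ q
    + X 2 * X 3 * X 0 ^ q * X 3 ^ q + X 1 * X 4 * X 1 ^ q * X 2 ^ q
    + X 2 * X 4 * X 0 ^ q * X 2 ^ q + X 3 * X 4 * X 0 ^ q * X 1 ^ q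
    - X 0 ^ 2 * ((X 0 : MvPolynomial (Fin 5) F) ^ q ^ 2 * X 0 ^ q ^ 4
      + X 1 ^ q ^ 2 * X 1 ^ q ^ 3 + X 2 ^ q ^ 2 * X 0 ^ q ^ 3)) * h20
end
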